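/- Let d ≥ 2, let Λ ⊆ K̃^d be a unimodular lattice, and let v₁,…,v_d ∈ Λ be linearly independent vectors with ‖v_i‖ = λ_i(Λ) for each i. Then for every 1 ≤ k ≤ d, the wedge product satisfies ‖v₁ ∧ v₂ ∧ … ∧ v_k‖ ≤ 1, where the norm on the k-th exterior power Λ^k K̃^d is the maximum of the absolute values of the coordinates with respect to the standard basis {e_{j₁} ∧ … ∧ e_{j_k} : j₁ < … < j_k}. (In particular ‖f_Mink(Λ)‖_flag ≤ 1.) -/

import Mathlib

noncomputable section

open scoped Classical

variable (Fq : Type) [Field Fq] [Fintype Fq]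

/-- `K̃ = 𝔽_q((x⁻¹))`, realized as formal Laurent series in `t = x⁻¹`. -/
abbrev Kt := LaurentSeries Fq

/-- The element `x` of `K̃` (the inverse of the Laurent series variable). -/
def Kx : Kt Fq := HahnSeries.single (-1 : ℤ) 1

/-- Absolute value `|f| = q^{deg f}`, i.e. `q^{-order f}` in terms of `t = x⁻¹`. -/
def Kabs (f : Kt Fq) : ℝ := if f = 0 then 0 else (Fintype.card Fq : ℝ) ^ (-f.order)

/-- The ring embedding of `R = 𝔽_q[x]` into `K̃`. -/
def polyK : Polynomial Fq →+* Kt Fq := (Polynomial.aeval (Kx Fq)).toRingHom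

/-- Sup norm on `K̃^d`. -/
def vnorm {d : ℕ} (v : Fin d → Kt Fq) : ℝ := ⨆ i, Kabs Fq (v i)

/-- The lattice `g·R^d`. -/
def lattice {d : ℕ} (g : Matrix (Fin d) (Fin d) (Kt Fq)) : Set (Fin d → Kt Fq) :=
  {v | ∃ c : Fin d → Polynomial Fq, v = g.mulVec fun j => polyK Fq (c j)}

/-- `i`-th successive minimum of `Λ` with respect to a norm `nrm`: the least `r > 0` such that
`Λ` contains `i` linearly independent vectors of norm at most `r`. -/
def minimaN {d : ℕ} (nrm : (Fin d → Kt Fq) → ℝ) (Λ : Set (Fin d → Kt Fq)) (i : ℕ) : ℝ :=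
  sInf {r : ℝ | 0 < r ∧ ∃ v : Fin i → Fin d → Kt Fq,
    (∀ j, v j ∈ Λ) ∧ LinearIndependent (Kt Fq) v ∧ ∀ j, nrm (v j) ≤ r}

/-- `i`-th successive minimum with respect to the sup norm. -/
def minima {d : ℕ} (Λ : Set (Fin d → Kt Fq)) (i : ℕ) : ℝ := minimaN Fq (vnorm Fq) Λ i

/-- Covering radius of `Λ` with respect to the norm `nrm`. -/
def covRad {d : ℕ} (nrm : (Fin d → Kt Fq) → ℝ) (Λ : Set (Fin d → Kt Fq)) : ℝ :=
  ⨆ w : Fin d → Kt Fq, ⨅ u : Λ, nrm (w - u.1)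

/-- Length of the shortest nonzero vector of `Λ`. -/
def ell {d : ℕ} (Λ : Set (Fin d → Kt Fq)) : ℝ :=
  sInf {r : ℝ | ∃ v ∈ Λ, v ≠ 0 ∧ vnorm Fq v = r}

/-- `Λ` is well rounded: it contains `d` linearly independent vectors of norm `ℓ(Λ)`. -/
def IsWellRounded {d : ℕ} (Λ : Set (Fin d → Kt Fq)) : Prop :=
  ∃ v : Fin d → Fin d → Kt Fq, (∀ j, v j ∈ Λ) ∧ LinearIndependent (Kt Fq) v ∧
    ∀ j, vnorm Fq (v j) = ell Fq Λ

/-- The multiplicative "norm" `N(v) = ∏ |v i|`. -/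
def Nprod {d : ℕ} (v : Fin d → Kt Fq) : ℝ := ∏ i, Kabs Fq (v i)

/-- The Minkowski function `μ(Λ) = sup_w inf_{u ∈ Λ} N(w - u)`. -/
def mink {d : ℕ} (Λ : Set (Fin d → Kt Fq)) : ℝ :=
  ⨆ w : Fin d → Kt Fq, ⨅ u : Λ, Nprod Fq (w - u.1)

/-!
Reduction theory over `𝔽_q[x]`. The bases of `Λ` are the columns `b_j` of `g C` with `C`
unimodular; let `‖b_j‖ = q^(-m_j)`. If the matrix of the coefficients of `x^(-m_j)` in the `b_j` is
singular, a unimodular column operation shrinks one `b_j` by a factor `q`. Otherwise its determinant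
is the coefficient of `x^(-∑ m_j)` in `det (g C)`, so `∏ ‖b_j‖ ≤ |det g| = 1`. Since the product is
at least `1` by the ultrametric Hadamard inequality, this descent ends in a basis with
`∏ ‖b_j‖ = 1`. Sorted by norm, it gives `λ_i ≤ ‖b_i‖`, and a monotone sequence with product `1`
has all initial products `≤ 1`. Hadamard's inequality bounds each `k × k` minor of
`v_1, …, v_k` by `∏_{i ≤ k} λ_i`.
-/

/-- The paper's `q`, as a real number. -/
abbrev qR : ℝ := Fintype.card Fq

lemma one_lt_qR : 1 < qR Fq := by exact_mod_cast Fintype.one_lt_card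

lemma qR_pos : 0 < qR Fq := one_pos.trans (one_lt_qR Fq)

section AbsoluteValue

variable {Fq}

@[simp]
lemma Kabs_zero : Kabs Fq 0 = 0 := if_pos rfl

lemma Kabs_of_ne_zero {f : Kt Fq} (hf : f ≠ 0) : Kabs Fq f = qR Fq ^ (-f.order) := if_neg hf

lemma Kabs_nonneg (f : Kt Fq) : 0 ≤ Kabs Fq f := by
  unfold Kabs; split_ifs <;> positivity

lemma Kabs_pos {f : Kt Fq} (hf : f ≠ 0) : 0 < Kabs Fq f := by
  rw [Kabs_of_ne_zero hf]; exact zpow_pos (qR_pos Fq) _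

lemma Kabs_mul (f g : Kt Fq) : Kabs Fq (f * g) = Kabs Fq f * Kabs Fq g := by
  rcases eq_or_ne f 0 with rfl | hf; · simp
  rcases eq_or_ne g 0 with rfl | hg; · simp
  rw [Kabs_of_ne_zero (mul_ne_zero hf hg), Kabs_of_ne_zero hf, Kabs_of_ne_zero hg,
    HahnSeries.order_mul hf hg, neg_add, zpow_add₀ (qR_pos Fq).ne']

lemma Kabs_neg (f : Kt Fq) : Kabs Fq (-f) = Kabs Fq f := by
  simp only [Kabs, neg_eq_zero, HahnSeries.order_neg]

lemma Kabs_add_le_max (f g : Kt Fq) : Kabs Fq (f + g) ≤ max (Kabs Fq f) (Kabs Fq g) := by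
  rcases eq_or_ne f 0 with rfl | hf; · simp
  rcases eq_or_ne g 0 with rfl | hg; · simp
  rcases eq_or_ne (f + g) 0 with hfg | hfg
  · rw [hfg, Kabs_zero]; exact le_max_of_le_left (Kabs_nonneg f)
  rw [Kabs_of_ne_zero hfg, Kabs_of_ne_zero hf, Kabs_of_ne_zero hg]
  have hmin := HahnSeries.min_order_le_order_add hfg
  rcases le_total f.order g.order with hle | hle
  · rw [min_eq_left hle] at hmin
    exact le_max_of_le_left (zpow_le_zpow_right₀ (one_lt_qR Fq).le (neg_le_neg hmin))
  · rw [min_eq_right hle] at hmin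
    exact le_max_of_le_right (zpow_le_zpow_right₀ (one_lt_qR Fq).le (neg_le_neg hmin))

lemma Kabs_sum_le {ι : Type*} (s : Finset ι) (f : ι → Kt Fq) {B : ℝ} (hB : 0 ≤ B)
    (h : ∀ i ∈ s, Kabs Fq (f i) ≤ B) : Kabs Fq (∑ i ∈ s, f i) ≤ B := by
  induction s using Finset.cons_induction with
  | empty => simpa using hB
  | cons a s ha ih =>
    rw [Finset.sum_cons]
    exact (Kabs_add_le_max _ _).trans (max_le (h a (Finset.mem_cons_self a s))
      (ih fun i hi => h i (Finset.mem_cons_of_mem hi)))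

lemma Kabs_prod {ι : Type*} (s : Finset ι) (f : ι → Kt Fq) :
    Kabs Fq (∏ i ∈ s, f i) = ∏ i ∈ s, Kabs Fq (f i) := by
  induction s using Finset.cons_induction with
  | empty => simp [Kabs]
  | cons a s ha ih => rw [Finset.prod_cons, Finset.prod_cons, Kabs_mul, ih]

lemma Kabs_units_smul (u : ℤˣ) (f : Kt Fq) : Kabs Fq (u • f) = Kabs Fq f := by
  rcases Int.units_eq_one_or u with rfl | rfl
  · rw [one_smul]
  · rw [Units.smul_def, Units.val_neg, Units.val_one, neg_smul, one_smul, Kabs_neg]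

lemma Kabs_le_zpow_iff (f : Kt Fq) (m : ℤ) :
    Kabs Fq f ≤ qR Fq ^ (-m) ↔ ∀ n < m, f.coeff n = 0 := by
  rcases eq_or_ne f 0 with rfl | hf
  · simp only [Kabs_zero, HahnSeries.coeff_zero, implies_true, iff_true]; positivity
  rw [Kabs_of_ne_zero hf, zpow_le_zpow_iff_right₀ (one_lt_qR Fq), neg_le_neg_iff]
  refine ⟨fun h n hn => HahnSeries.coeff_eq_zero_of_lt_order (hn.trans_le h), fun h => ?_⟩
  by_contra! hlt
  exact HahnSeries.coeff_order_eq_zero.not.mpr hf (h _ hlt)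

lemma zpow_le_Kabs_of_coeff_ne_zero {f : Kt Fq} {n : ℤ} (h : f.coeff n ≠ 0) :
    qR Fq ^ (-n) ≤ Kabs Fq f := by
  have hf : f ≠ 0 := fun h0 => h (by simp [h0])
  rw [Kabs_of_ne_zero hf]
  exact zpow_le_zpow_right₀ (one_lt_qR Fq).le
    (neg_le_neg (HahnSeries.order_le_of_coeff_ne_zero h))

/-- Hadamard's inequality, which for an ultrametric absolute value needs no Gram–Schmidt. -/
lemma Kabs_det_le_prod {ι : Type*} [Fintype ι] [DecidableEq ι] (M : Matrix ι ι (Kt Fq))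
    (B : ι → ℝ) (hB : ∀ i, 0 ≤ B i) (h : ∀ i j, Kabs Fq (M i j) ≤ B i) :
    Kabs Fq M.det ≤ ∏ i, B i := by
  rw [Matrix.det_apply]
  refine Kabs_sum_le _ _ (Finset.prod_nonneg fun i _ => hB i) fun σ _ => ?_
  rw [Kabs_units_smul, Kabs_prod, ← Equiv.prod_comp σ B]
  exact Finset.prod_le_prod (fun i _ => Kabs_nonneg _) fun i _ => h (σ i) i

end AbsoluteValue

section SupNorm

variable {Fq} {d : ℕ}

lemma Kabs_le_vnorm (w : Fin d → Kt Fq) (i : Fin d) : Kabs Fq (w i) ≤ vnorm Fq w :=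
  le_ciSup (f := fun i => Kabs Fq (w i)) (Set.finite_range _).bddAbove i

lemma vnorm_nonneg (w : Fin d → Kt Fq) : 0 ≤ vnorm Fq w :=
  Real.iSup_nonneg fun i => Kabs_nonneg (w i)

lemma vnorm_le_zpow_iff (w : Fin d → Kt Fq) (m : ℤ) :
    vnorm Fq w ≤ qR Fq ^ (-m) ↔ ∀ i, ∀ n < m, (w i).coeff n = 0 := by
  simp only [← Kabs_le_zpow_iff]
  exact ⟨fun h i => (Kabs_le_vnorm w i).trans h, fun h => Real.iSup_le h (by positivity)⟩

lemma exists_vnorm_eq_Kabs {w : Fin d → Kt Fq} (hw : w ≠ 0) :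
    ∃ i, w i ≠ 0 ∧ vnorm Fq w = Kabs Fq (w i) := by
  obtain ⟨i₁, hi₁⟩ := Function.ne_iff.mp hw
  have : Nonempty (Fin d) := ⟨i₁⟩
  obtain ⟨i, hi⟩ := Finite.exists_max fun i => Kabs Fq (w i)
  refine ⟨i, fun h0 => ?_, le_antisymm (ciSup_le hi) (Kabs_le_vnorm w i)⟩
  have := (Kabs_pos hi₁).trans_le (hi i₁)
  simp [h0] at this

lemma vnorm_pos {w : Fin d → Kt Fq} (hw : w ≠ 0) : 0 < vnorm Fq w := by
  obtain ⟨i, hi, heq⟩ := exists_vnorm_eq_Kabs hw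
  exact heq ▸ Kabs_pos hi

lemma exists_vnorm_eq_zpow {w : Fin d → Kt Fq} (hw : w ≠ 0) :
    ∃ m : ℤ, vnorm Fq w = qR Fq ^ (-m) := by
  obtain ⟨i, hi, heq⟩ := exists_vnorm_eq_Kabs hw
  exact ⟨_, heq.trans (Kabs_of_ne_zero hi)⟩

end SupNorm

section LaurentCoeff

variable {R : Type*} [CommRing R]

lemma coeff_mul_of_coeff_eq_zero {f g : LaurentSeries R} {a b : ℤ}
    (hf : ∀ n < a, f.coeff n = 0) (hg : ∀ n < b, g.coeff n = 0) :
    (∀ n < a + b, (f * g).coeff n = 0) ∧ (f * g).coeff (a + b) = f.coeff a * g.coeff b := by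
  refine ⟨fun n hn => ?_, ?_⟩ <;> rw [HahnSeries.coeff_mul]
  · refine Finset.sum_eq_zero fun p hp => ?_
    obtain ⟨h1, h2, h3⟩ := Finset.mem_antidiagonal.mp hp
    have := le_of_not_gt fun h => h1 (hf _ h)
    have := le_of_not_gt fun h => h2 (hg _ h)
    omega
  · refine Finset.sum_eq_single (a, b) (fun p hp hne => absurd ?_ hne) fun hab => ?_
    · obtain ⟨h1, h2, h3⟩ := Finset.mem_antidiagonal.mp hp
      have := le_of_not_gt fun h => h1 (hf _ h)
      have := le_of_not_gt fun h => h2 (hg _ h)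
      ext <;> simp only <;> omega
    · by_contra hne
      exact hab (Finset.mem_antidiagonal.mpr
        ⟨left_ne_zero_of_mul hne, right_ne_zero_of_mul hne, rfl⟩)

lemma coeff_prod_of_coeff_eq_zero {ι : Type*} (s : Finset ι) (f : ι → LaurentSeries R)
    (m : ι → ℤ) (h : ∀ i ∈ s, ∀ n < m i, (f i).coeff n = 0) :
    (∀ n < ∑ i ∈ s, m i, (∏ i ∈ s, f i).coeff n = 0) ∧
      (∏ i ∈ s, f i).coeff (∑ i ∈ s, m i) = ∏ i ∈ s, (f i).coeff (m i) := by
  induction s using Finset.cons_induction with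
  | empty =>
    refine ⟨fun n hn => ?_, by simp⟩
    rw [Finset.sum_empty] at hn
    simp [HahnSeries.coeff_one, hn.ne]
  | cons a s ha ih =>
    obtain ⟨ih₁, ih₂⟩ := ih fun i hi => h i (Finset.mem_cons_of_mem hi)
    obtain ⟨h₁, h₂⟩ := coeff_mul_of_coeff_eq_zero (h a (Finset.mem_cons_self a s)) ih₁
    simp only [Finset.prod_cons, Finset.sum_cons]
    exact ⟨h₁, h₂.trans (by rw [ih₂])⟩

lemma coeff_det_eq_det_coeff {n : Type*} [Fintype n] [DecidableEq n]
    (M : Matrix n n (LaurentSeries R)) (m : n → ℤ) (hM : ∀ i j, ∀ k < m j, (M i j).coeff k = 0) :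
    M.det.coeff (∑ j, m j) = (Matrix.of fun i j => (M i j).coeff (m j)).det := by
  rw [Matrix.det_apply, Matrix.det_apply, HahnSeries.coeff_sum]
  refine Finset.sum_congr rfl fun σ _ => ?_
  rw [Units.smul_def, HahnSeries.coeff_smul, (coeff_prod_of_coeff_eq_zero Finset.univ
    (fun j => M (σ j) j) m fun j _ => hM (σ j) j).2, Units.smul_def]
  rfl

end LaurentCoeff

lemma prod_zpow_eq_zpow_sum {G₀ ι : Type*} [CommGroupWithZero G₀] (s : Finset ι) (m : ι → ℤ)
    {a : G₀} (ha : a ≠ 0) : ∏ i ∈ s, a ^ m i = a ^ ∑ i ∈ s, m i := by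
  induction s using Finset.cons_induction with
  | empty => simp
  | cons i s hi ih => rw [Finset.prod_cons, Finset.sum_cons, ih, zpow_add₀ ha]

open scoped Matrix

section Reduction

variable {F : Type} [Field F] {ι : Type*} [Fintype ι] [DecidableEq ι]

lemma polyK_C_mul_X_pow (r : F) (e : ℕ) :
    polyK F (Polynomial.C r * Polynomial.X ^ e) = HahnSeries.single (-(e : ℤ)) r := by
  simp [polyK, Kx, HahnSeries.algebraMap_apply', HahnSeries.single_pow, HahnSeries.C_apply,
    HahnSeries.single_mul_single]

lemma det_one_updateCol {R : Type*} [CommRing R] (j : ι) (c : ι → R) :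
    ((1 : Matrix ι ι R).updateCol j c).det = c j := by
  rw [← Matrix.cramer_apply, Matrix.cramer_one]
  rfl

lemma exists_unimodular_reduce_column (M : Matrix ι ι (LaurentSeries F)) (m : ι → ℤ)
    (hM : ∀ i j, ∀ k < m j, (M i j).coeff k = 0)
    (hU : (Matrix.of fun i j => (M i j).coeff (m j)).det = 0) :
    ∃ (E : Matrix ι ι (Polynomial F)) (j₀ : ι), IsUnit E.det ∧
      (∀ j ≠ j₀, (M * E.map (polyK F))ᵀ j = Mᵀ j) ∧
      ∀ i, ∀ k < m j₀ + 1, ((M * E.map (polyK F)) i j₀).coeff k = 0 := by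
  obtain ⟨a, ha0, ha⟩ := Matrix.exists_mulVec_eq_zero_iff.mpr hU
  obtain ⟨j₀, hj₀, hmin⟩ := Finset.exists_min_image (Finset.univ.filter (a · ≠ 0)) m <| by
    obtain ⟨j, hj⟩ := Function.ne_iff.mp ha0
    exact ⟨j, by simpa using hj⟩
  -- the new column `j₀` is `∑ₜ a t x^(m t - m j₀) • (column t)`: its coefficients vanish below
  -- degree `m j₀`, and in degree `m j₀` they are the entries of `U *ᵥ a = 0`, `U` as in `hU`
  set c : ι → Polynomial F := fun t => Polynomial.C (a t) * Polynomial.X ^ (m t - m j₀).toNat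
  refine ⟨(1 : Matrix ι ι _).updateCol j₀ c, j₀, ?_, fun j hj => ?_, fun i k hk => ?_⟩
  · rw [det_one_updateCol, show c j₀ = Polynomial.C (a j₀) by simp [c]]
    exact Polynomial.isUnit_C.mpr (isUnit_iff_ne_zero.mpr (by simpa using hj₀))
  · ext i
    simp [Matrix.map_updateCol, Matrix.mul_updateCol, Matrix.updateCol_ne hj]
  have hterm : ∀ t, (M i t * polyK F (c t)).coeff k = (M i t).coeff (k - m j₀ + m t) * a t := by
    intro t
    rcases eq_or_ne (a t) 0 with hat | hat
    · simp [c, hat]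
    have : m j₀ ≤ m t := hmin t (by simpa using hat)
    rw [polyK_C_mul_X_pow, Int.toNat_of_nonneg (by omega)]
    convert HahnSeries.coeff_mul_single_add (x := M i t) (r := a t) (a := k - m j₀ + m t)
      (b := -(m t - m j₀)) using 2
    ring
  rw [Matrix.map_updateCol, Matrix.mul_updateCol, Matrix.updateCol_self, Matrix.mulVec,
    dotProduct, HahnSeries.coeff_sum]
  simp only [Function.comp_apply, hterm]
  rcases (Int.lt_add_one_iff.mp hk).lt_or_eq with hlt | rfl
  · exact Finset.sum_eq_zero fun t _ => by rw [hM i t _ (by omega), zero_mul]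
  · simpa [Matrix.mulVec, dotProduct] using congrFun ha i

lemma transpose_mul_map_polyK_mem_lattice {d : ℕ} (g : Matrix (Fin d) (Fin d) (Kt F))
    (C : Matrix (Fin d) (Fin d) (Polynomial F)) (j : Fin d) :
    (g * C.map (polyK F))ᵀ j ∈ lattice F g :=
  ⟨fun l => C l j, funext fun i => by simp [Matrix.mul_apply, Matrix.mulVec, dotProduct]⟩

end Reduction

section Lattice

variable {Fq} {d : ℕ}

lemma Kabs_polyK_of_isUnit {p : Polynomial Fq} (hp : IsUnit p) : Kabs Fq (polyK Fq p) = 1 := by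
  obtain ⟨r, hr, rfl⟩ := Polynomial.isUnit_iff.mp hp
  have := polyK_C_mul_X_pow r 0
  rw [pow_zero, mul_one] at this
  rw [this, Kabs_of_ne_zero (HahnSeries.single_ne_zero hr.ne_zero),
    HahnSeries.order_single hr.ne_zero]
  simp

lemma Kabs_det_mul_map_polyK (M : Matrix (Fin d) (Fin d) (Kt Fq))
    {C : Matrix (Fin d) (Fin d) (Polynomial Fq)} (hC : IsUnit C.det) :
    Kabs Fq (M * C.map (polyK Fq)).det = Kabs Fq M.det := by
  rw [Matrix.det_mul, ← RingHom.mapMatrix_apply, ← RingHom.map_det, Kabs_mul,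
    Kabs_polyK_of_isUnit hC, mul_one]

lemma prod_vnorm_le_Kabs_det_or_exists_reduce (M : Matrix (Fin d) (Fin d) (Kt Fq))
    (hM : M.det ≠ 0) :
    ∏ j, vnorm Fq (Mᵀ j) ≤ Kabs Fq M.det ∨
      ∃ E : Matrix (Fin d) (Fin d) (Polynomial Fq), IsUnit E.det ∧
        ∏ j, vnorm Fq ((M * E.map (polyK Fq))ᵀ j) ≤ (qR Fq)⁻¹ * ∏ j, vnorm Fq (Mᵀ j) := by
  have hcol : ∀ j, Mᵀ j ≠ 0 := fun j h0 =>
    hM (Matrix.det_eq_zero_of_column_eq_zero j fun i => congrFun h0 i)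
  choose m hm using fun j => exists_vnorm_eq_zpow (hcol j)
  have hcoeff : ∀ i j, ∀ k < m j, (M i j).coeff k = 0 := fun i j =>
    (vnorm_le_zpow_iff (Mᵀ j) (m j)).mp (hm j).le i
  by_cases hU : (Matrix.of fun i j => (M i j).coeff (m j)).det = 0
  · obtain ⟨E, j₀, hE, hcols, hj₀⟩ := exists_unimodular_reduce_column M m hcoeff hU
    refine .inr ⟨E, hE, ?_⟩
    rw [← Finset.mul_prod_erase _ _ (Finset.mem_univ j₀),
      ← Finset.mul_prod_erase _ _ (Finset.mem_univ j₀), ← mul_assoc,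
      Finset.prod_congr rfl fun j hj => by rw [hcols j (Finset.ne_of_mem_erase hj)]]
    refine mul_le_mul_of_nonneg_right ?_ (Finset.prod_nonneg fun j _ => vnorm_nonneg _)
    rw [hm, ← zpow_neg_one, ← zpow_add₀ (qR_pos Fq).ne',
      show -1 + -m j₀ = -(m j₀ + 1) by ring]
    exact (vnorm_le_zpow_iff _ _).mpr hj₀
  · refine .inl ?_
    rw [Finset.prod_congr rfl fun j _ => hm j, prod_zpow_eq_zpow_sum _ _ (qR_pos Fq).ne',
      Finset.sum_neg_distrib]
    exact zpow_le_Kabs_of_coeff_ne_zero (by rwa [coeff_det_eq_det_coeff M m hcoeff])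

lemma exists_unimodular_prod_vnorm_eq_one (g : Matrix (Fin d) (Fin d) (Kt Fq))
    (hg : Kabs Fq g.det = 1) :
    ∃ C : Matrix (Fin d) (Fin d) (Polynomial Fq), IsUnit C.det ∧
      ∏ j, vnorm Fq ((g * C.map (polyK Fq))ᵀ j) = 1 := by
  have hdet {C : Matrix (Fin d) (Fin d) (Polynomial Fq)} (hC : IsUnit C.det) :
      Kabs Fq (g * C.map (polyK Fq)).det = 1 :=
    (Kabs_det_mul_map_polyK g hC).trans hg
  have hone_le {C : Matrix (Fin d) (Fin d) (Polynomial Fq)} (hC : IsUnit C.det) :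
      1 ≤ ∏ j, vnorm Fq ((g * C.map (polyK Fq))ᵀ j) := by
    rw [← hdet hC, ← Matrix.det_transpose]
    exact Kabs_det_le_prod _ _ (fun j => vnorm_nonneg _) fun j i => Kabs_le_vnorm _ i
  suffices h : ∀ N : ℕ, ∀ C : Matrix (Fin d) (Fin d) (Polynomial Fq), IsUnit C.det →
      ∏ j, vnorm Fq ((g * C.map (polyK Fq))ᵀ j) ≤ qR Fq ^ N →
      ∃ C : Matrix (Fin d) (Fin d) (Polynomial Fq), IsUnit C.det ∧
        ∏ j, vnorm Fq ((g * C.map (polyK Fq))ᵀ j) = 1 by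
    obtain ⟨N, hN⟩ := pow_unbounded_of_one_lt (∏ j, vnorm Fq ((g * (1 : Matrix (Fin d) (Fin d)
      (Polynomial Fq)).map (polyK Fq))ᵀ j)) (one_lt_qR Fq)
    exact h N 1 (by simp) hN.le
  intro N
  induction N with
  | zero => exact fun C hC hle => ⟨C, hC, le_antisymm (by simpa using hle) (hone_le hC)⟩
  | succ N ih =>
    intro C hC hle
    have hne : (g * C.map (polyK Fq)).det ≠ 0 := fun h0 => by simpa [h0] using hdet hC
    rcases prod_vnorm_le_Kabs_det_or_exists_reduce _ hne with hred | ⟨E, hE, hlt⟩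
    · exact ⟨C, hC, le_antisymm (hred.trans (hdet hC).le) (hone_le hC)⟩
    refine ih (C * E) (by rw [Matrix.det_mul]; exact hC.mul hE) ?_
    rw [Matrix.map_mul, ← Matrix.mul_assoc]
    calc _ ≤ (qR Fq)⁻¹ * ∏ j, vnorm Fq ((g * C.map (polyK Fq))ᵀ j) := hlt
      _ ≤ (qR Fq)⁻¹ * qR Fq ^ (N + 1) := by gcongr
      _ = qR Fq ^ N := by
        rw [pow_succ, mul_comm, mul_assoc, mul_inv_cancel₀ (qR_pos Fq).ne', mul_one]

lemma exists_basis_monotone_prod_vnorm_eq_one (g : Matrix (Fin d) (Fin d) (Kt Fq))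
    (hg : Kabs Fq g.det = 1) :
    ∃ b : Fin d → Fin d → Kt Fq, (∀ j, b j ∈ lattice Fq g) ∧ LinearIndependent (Kt Fq) b ∧
      Monotone (fun j => vnorm Fq (b j)) ∧ ∏ j, vnorm Fq (b j) = 1 := by
  obtain ⟨C, hC, hprod⟩ := exists_unimodular_prod_vnorm_eq_one g hg
  set B := g * C.map (polyK Fq)
  have hB : IsUnit B := by
    refine (Matrix.isUnit_iff_isUnit_det B).mpr (isUnit_iff_ne_zero.mpr fun h0 => ?_)
    simpa [B, h0, hg] using Kabs_det_mul_map_polyK g hC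
  set σ := Tuple.sort fun j => vnorm Fq (Bᵀ j)
  refine ⟨fun j => Bᵀ (σ j), fun j => transpose_mul_map_polyK_mem_lattice g C _,
    (Matrix.linearIndependent_cols_iff_isUnit.mpr hB).comp σ σ.injective,
    Tuple.monotone_sort fun j => vnorm Fq (Bᵀ j), ?_⟩
  rwa [Equiv.prod_comp σ fun j => vnorm Fq (Bᵀ j)]

lemma minima_le_vnorm_of_monotone {Λ : Set (Fin d → Kt Fq)} {n : ℕ} {w : Fin n → Fin d → Kt Fq}
    (hw : ∀ j, w j ∈ Λ) (hind : LinearIndependent (Kt Fq) w)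
    (hmono : Monotone fun j => vnorm Fq (w j)) (i : Fin n) :
    minima Fq Λ (i + 1) ≤ vnorm Fq (w i) :=
  csInf_le ⟨0, fun _ hr => hr.1.le⟩ ⟨vnorm_pos (hind.ne_zero i), fun j => w (Fin.castLE i.isLt j),
    fun j => hw _, hind.comp _ (Fin.castLE_injective _),
    fun j => hmono (Fin.le_def.mpr (by simp only [Fin.val_castLE]; omega))⟩

end Lattice

lemma prod_le_one_of_monotone_of_isLowerSet {ι : Type*} [LinearOrder ι] [Fintype ι]
    {μ : ι → ℝ} (h0 : ∀ i, 0 ≤ μ i) (hmono : Monotone μ) (hprod : ∏ i, μ i ≤ 1)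
    {s : Finset ι} (hs : IsLowerSet (s : Set ι)) : ∏ i ∈ s, μ i ≤ 1 := by
  by_cases h : ∃ i ∈ s, 1 < μ i
  swap
  · exact Finset.prod_le_one (fun i _ => h0 i) fun i hi => not_lt.mp fun h' => h ⟨i, hi, h'⟩
  obtain ⟨i, hi, hμi⟩ := h
  have hcompl : 1 ≤ ∏ j ∈ sᶜ, μ j := Finset.one_le_prod fun j hj =>
    hμi.le.trans (hmono (le_of_not_ge fun hji => Finset.mem_compl.mp hj (hs hji hi)))
  calc ∏ i ∈ s, μ i ≤ (∏ i ∈ s, μ i) * ∏ j ∈ sᶜ, μ j :=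
        le_mul_of_one_le_right (Finset.prod_nonneg fun i _ => h0 i) hcompl
    _ = ∏ i, μ i := Finset.prod_mul_prod_compl s μ
    _ ≤ 1 := hprod

lemma prod_castLE_le_one_of_monotone {d k : ℕ} (hk : k ≤ d) {μ : Fin d → ℝ} (h0 : ∀ i, 0 ≤ μ i)
    (hmono : Monotone μ) (hprod : ∏ i, μ i ≤ 1) : ∏ s : Fin k, μ (Fin.castLE hk s) ≤ 1 := by
  refine (Finset.prod_map Finset.univ (Fin.castLEEmb hk) μ).symm.trans_le
    (prod_le_one_of_monotone_of_isLowerSet h0 hmono hprod fun a b hba ha => ?_)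
  simp only [Finset.coe_map, Fin.castLEEmb_apply, Finset.coe_univ, Set.image_univ,
    Fin.range_castLE, Set.mem_ofPred_eq] at ha ⊢
  exact (Fin.le_def.mp hba).trans_lt ha

theorem wedge_norm_le_one {d : ℕ}
    (g : Matrix (Fin d) (Fin d) (Kt Fq)) (hg : Kabs Fq g.det = 1)
    (v : Fin d → Fin d → Kt Fq)
    (hmin : ∀ i : Fin d, vnorm Fq (v i) = minima Fq (lattice Fq g) ((i : ℕ) + 1)) :
    ∀ (k : ℕ), 1 ≤ k → ∀ hk : k ≤ d,
      (⨆ J : {J : Fin k → Fin d // StrictMono J},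
        Kabs Fq (Matrix.of fun s t : Fin k => v (Fin.castLE hk s) (J.1 t)).det) ≤ 1 := by
  intro k _ hk
  obtain ⟨b, hb_mem, hb_ind, hb_mono, hb_prod⟩ := exists_basis_monotone_prod_vnorm_eq_one g hg
  have hvb (i : Fin d) : vnorm Fq (v i) ≤ vnorm Fq (b i) :=
    (hmin i).trans_le (minima_le_vnorm_of_monotone hb_mem hb_ind hb_mono i)
  refine Real.iSup_le (fun J => ?_) zero_le_one
  calc _ ≤ ∏ s : Fin k, vnorm Fq (v (Fin.castLE hk s)) :=
        Kabs_det_le_prod _ _ (fun s => vnorm_nonneg _) fun s t => Kabs_le_vnorm _ _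
    _ ≤ ∏ s : Fin k, vnorm Fq (b (Fin.castLE hk s)) :=
        Finset.prod_le_prod (fun s _ => vnorm_nonneg _) fun s _ => hvb _
    _ ≤ 1 := prod_castLE_le_one_of_monotone hk (fun j => vnorm_nonneg _) hb_mono hb_prod.le
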